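/- The Faran map H₃(z₁,z₂) = (z₁³, √3 z₁z₂, z₂³) maps M into M' and is 3-nondegenerate at p = (1,0): with v = ρ'_{Z'}∘(H₃, H̄₃) = (z̄₁³, √3 z̄₁z̄₂, z̄₂³), the spaces E_k(p) = span_ℂ{v(p), (Lv)(p), …, (L^k v)(p)} satisfy E₃(p) = ℂ³ and E₂(p) ≠ ℂ³. -/

import Mathlib

open Complex Topology

noncomputable section

/-- The Wirtinger derivative `∂/∂z̄₁` of a function on `ℂ²`. -/
def dzb1 (f : ℂ × ℂ → ℂ) (p : ℂ × ℂ) : ℂ :=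
  (1 / 2 : ℂ) * (fderiv ℝ f p (1, 0) + Complex.I * fderiv ℝ f p (Complex.I, 0))

/-- The Wirtinger derivative `∂/∂z̄₂` of a function on `ℂ²`. -/
def dzb2 (f : ℂ × ℂ → ℂ) (p : ℂ × ℂ) : ℂ :=
  (1 / 2 : ℂ) * (fderiv ℝ f p (0, 1) + Complex.I * fderiv ℝ f p (0, Complex.I))

/-- The CR vector field `L = z₂ ∂/∂z̄₁ − z₁ ∂/∂z̄₂` tangent to the unit sphere in `ℂ²`. -/
def Lsph (f : ℂ × ℂ → ℂ) (p : ℂ × ℂ) : ℂ :=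
  p.2 * dzb1 f p - p.1 * dzb2 f p

/-- `L` acting componentwise on `ℂ³`-valued functions. -/
def LsphV (v : ℂ × ℂ → ℂ × ℂ × ℂ) (p : ℂ × ℂ) : ℂ × ℂ × ℂ :=
  (Lsph (fun q => (v q).1) p, Lsph (fun q => (v q).2.1) p, Lsph (fun q => (v q).2.2) p)

/-- The defining function `ρ' = |z₁'|² + |z₂'|² + |z₃'|² − 1` of the unit sphere in `ℂ³`. -/
def rhoSph (Z : ℂ × ℂ × ℂ) : ℝ :=
  Complex.normSq Z.1 + Complex.normSq Z.2.1 + Complex.normSq Z.2.2 - 1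

/-- The Wirtinger (complex) gradient of a real-valued function on `ℂ³`. -/
def gradSph (r : ℂ × ℂ × ℂ → ℝ) (Z : ℂ × ℂ × ℂ) : ℂ × ℂ × ℂ :=
  ((1 / 2 : ℂ) * ((fderiv ℝ r Z (1, 0, 0) : ℂ) -
      Complex.I * (fderiv ℝ r Z (Complex.I, 0, 0) : ℂ)),
    (1 / 2 : ℂ) * ((fderiv ℝ r Z (0, 1, 0) : ℂ) -
      Complex.I * (fderiv ℝ r Z (0, Complex.I, 0) : ℂ)),
    (1 / 2 : ℂ) * ((fderiv ℝ r Z (0, 0, 1) : ℂ) -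
      Complex.I * (fderiv ℝ r Z (0, 0, Complex.I) : ℂ)))

/-- Faran's third map `H₃(z₁,z₂) = (z₁³, √3 z₁z₂, z₂³)` of the 2-ball into the 3-ball. -/
def Hfaran (p : ℂ × ℂ) : ℂ × ℂ × ℂ :=
  (p.1 ^ 3, ((Real.sqrt 3 : ℝ) : ℂ) * p.1 * p.2, p.2 ^ 3)

/-- `v = ρ'_{Z'}∘(H₃,H̄₃) = (z̄₁³, √3 z̄₁z̄₂, z̄₂³)`. -/
def vFaran (p : ℂ × ℂ) : ℂ × ℂ × ℂ :=
  (((starRingEnd ℂ) p.1) ^ 3,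
    ((Real.sqrt 3 : ℝ) : ℂ) * (starRingEnd ℂ) p.1 * (starRingEnd ℂ) p.2,
    ((starRingEnd ℂ) p.2) ^ 3)

/-! `L` is a derivation that kills holomorphic functions and maps `z̄₁ ↦ z₂`, `z̄₂ ↦ -z₁`, so
`L^j v` is computed by the Leibniz rule alone; at `p = (1,0)` the vectors `v, Lv, L²v, L³v` are
`(1,0,0)`, `(0,-√3,0)`, `0`, `(0,0,-6)`. Hence `E₂(p)` lies in the hyperplane `z₃' = 0` while
`E₃(p)` contains a basis of `ℂ³`. That `H₃` maps `M` into `M'` is the identity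
`|z₁|⁶ + 3|z₁|²|z₂|² + |z₂|⁶ = (|z₁|² + |z₂|²)³` on `M`. -/

section Derivation

variable {f g : ℂ × ℂ → ℂ} {p : ℂ × ℂ}

theorem Lsph_mul (hf : DifferentiableAt ℝ f p) (hg : DifferentiableAt ℝ g p) :
    Lsph (fun q => f q * g q) p = f p * Lsph g p + g p * Lsph f p := by
  simp only [Lsph, dzb1, dzb2, fderiv_fun_mul hf hg, add_apply, smul_apply, smul_eq_mul]
  ring

theorem Lsph_sub (hf : DifferentiableAt ℝ f p) (hg : DifferentiableAt ℝ g p) :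
    Lsph (fun q => f q - g q) p = Lsph f p - Lsph g p := by
  simp only [Lsph, dzb1, dzb2, fderiv_fun_sub hf hg, sub_apply]
  ring

theorem Lsph_pow (hf : DifferentiableAt ℝ f p) (n : ℕ) :
    Lsph (fun q => f q ^ n) p = n * f p ^ (n - 1) * Lsph f p := by
  simp only [Lsph, dzb1, dzb2, fderiv_fun_pow n hf, smul_apply, smul_eq_mul, nsmul_eq_mul]
  ring

theorem Lsph_eq_zero_of_differentiableAt (hf : DifferentiableAt ℂ f p) : Lsph f p = 0 := by
  have hI (v : ℂ × ℂ) : fderiv ℝ f p (Complex.I • v) = Complex.I * fderiv ℝ f p v := by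
    rw [hf.hasFDerivAt.restrictScalars ℝ |>.fderiv]
    simp
  have h1 := hI (1, 0)
  have h2 := hI (0, 1)
  simp only [Prod.smul_mk, smul_eq_mul, mul_one, mul_zero] at h1 h2
  simp only [Lsph, dzb1, dzb2, h1, h2, ← mul_assoc, Complex.I_mul_I]
  ring

theorem Lsph_conj_fst : Lsph (fun q => (starRingEnd ℂ) q.1) p = p.2 := by
  have h : HasFDerivAt (fun q : ℂ × ℂ => (starRingEnd ℂ) q.1)
      (Complex.conjCLE.toContinuousLinearMap.comp (ContinuousLinearMap.fst ℝ ℂ ℂ)) p :=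
    Complex.conjCLE.toContinuousLinearMap.hasFDerivAt.comp p hasFDerivAt_fst
  simp [Lsph, dzb1, dzb2, h.fderiv]
  ring

theorem Lsph_conj_snd : Lsph (fun q => (starRingEnd ℂ) q.2) p = -p.1 := by
  have h : HasFDerivAt (fun q : ℂ × ℂ => (starRingEnd ℂ) q.2)
      (Complex.conjCLE.toContinuousLinearMap.comp (ContinuousLinearMap.snd ℝ ℂ ℂ)) p :=
    Complex.conjCLE.toContinuousLinearMap.hasFDerivAt.comp p hasFDerivAt_snd
  simp [Lsph, dzb1, dzb2, h.fderiv]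
  ring

end Derivation

theorem LsphV_vFaran : LsphV vFaran = fun p =>
    (3 * p.2 * (starRingEnd ℂ) p.1 ^ 2,
      ((Real.sqrt 3 : ℝ) : ℂ) * (p.2 * (starRingEnd ℂ) p.2 - p.1 * (starRingEnd ℂ) p.1),
      -3 * p.1 * (starRingEnd ℂ) p.2 ^ 2) := by
  funext p
  simp (disch := fun_prop) only [LsphV, vFaran, Lsph_mul, Lsph_pow, Lsph_conj_fst, Lsph_conj_snd,
    Lsph_eq_zero_of_differentiableAt, Prod.mk.injEq]
  refine ⟨by ring, by ring, by ring⟩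

theorem iterate_two_LsphV_vFaran : LsphV^[2] vFaran = fun p =>
    (6 * p.2 ^ 2 * (starRingEnd ℂ) p.1, -2 * ((Real.sqrt 3 : ℝ) : ℂ) * (p.1 * p.2),
      6 * p.1 ^ 2 * (starRingEnd ℂ) p.2) := by
  funext p
  rw [Function.iterate_succ_apply', Function.iterate_one, LsphV_vFaran]
  simp (disch := fun_prop) only [LsphV, Lsph_mul, Lsph_pow, Lsph_sub, Lsph_conj_fst,
    Lsph_conj_snd, Lsph_eq_zero_of_differentiableAt, Prod.mk.injEq]
  refine ⟨by ring, by ring, by ring⟩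

theorem iterate_three_LsphV_vFaran :
    LsphV^[3] vFaran = fun p => (6 * p.2 ^ 3, 0, -6 * p.1 ^ 3) := by
  funext p
  rw [Function.iterate_succ_apply', iterate_two_LsphV_vFaran]
  simp (disch := fun_prop) only [LsphV, Lsph_mul, Lsph_conj_fst, Lsph_conj_snd,
    Lsph_eq_zero_of_differentiableAt, Prod.mk.injEq]
  exact ⟨by ring, trivial, by ring⟩

theorem hasFDerivAt_normSq (z : ℂ) : HasFDerivAt Complex.normSq (2 • innerSL ℝ z) z := by
  rw [show (Complex.normSq : ℂ → ℝ) = fun w => ‖w‖ ^ 2 from funext Complex.normSq_eq_norm_sq]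
  exact (hasStrictFDerivAt_norm_sq z).hasFDerivAt

theorem fderiv_rhoSph_apply (Z W : ℂ × ℂ × ℂ) : fderiv ℝ rhoSph Z W =
    2 * (inner ℝ Z.1 W.1 + inner ℝ Z.2.1 W.2.1 + inner ℝ Z.2.2 W.2.2) := by
  have h : HasFDerivAt rhoSph _ Z := (((hasFDerivAt_normSq Z.1).comp Z hasFDerivAt_fst).add
    ((hasFDerivAt_normSq Z.2.1).comp Z (hasFDerivAt_fst.comp Z hasFDerivAt_snd))).add
    ((hasFDerivAt_normSq Z.2.2).comp Z (hasFDerivAt_snd.comp Z hasFDerivAt_snd)) |>.sub_const 1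
  rw [h.fderiv]
  simp
  ring

theorem gradSph_rhoSph (Z : ℂ × ℂ × ℂ) :
    gradSph rhoSph Z = ((starRingEnd ℂ) Z.1, (starRingEnd ℂ) Z.2.1, (starRingEnd ℂ) Z.2.2) := by
  simp [gradSph, fderiv_rhoSph_apply, Complex.inner, Complex.ext_iff]

theorem vFaran_eq_gradSph_rhoSph_comp_Hfaran (p : ℂ × ℂ) :
    vFaran p = gradSph rhoSph (Hfaran p) := by
  simp [gradSph_rhoSph, vFaran, Hfaran]

theorem rhoSph_Hfaran (p : ℂ × ℂ) :
    rhoSph (Hfaran p) = (normSq p.1 + normSq p.2) ^ 3 - 1 +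
      3 * normSq p.1 * normSq p.2 * (1 - (normSq p.1 + normSq p.2)) := by
  simp only [rhoSph, Hfaran, Complex.normSq_mul, map_pow, Complex.normSq_ofReal,
    Real.mul_self_sqrt zero_le_three]
  ring

section Span

variable {K : Type*} [Field K] {S : Set (K × K × K)}

theorem span_eq_top_of_diagonal_mem {a b c : K} (ha : a ≠ 0) (hb : b ≠ 0) (hc : c ≠ 0)
    (h₁ : (a, 0, 0) ∈ S) (h₂ : (0, b, 0) ∈ S) (h₃ : (0, 0, c) ∈ S) :
    Submodule.span K S = ⊤ := by
  refine Submodule.eq_top_iff'.2 fun ⟨x, y, z⟩ => ?_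
  have hxyz : ((x, y, z) : K × K × K) =
      (x / a) • (a, 0, 0) + (y / b) • (0, b, 0) + (z / c) • (0, 0, c) := by
    simp [ha, hb, hc]
  rw [hxyz]
  exact add_mem (add_mem (Submodule.smul_mem _ _ (Submodule.subset_span h₁))
    (Submodule.smul_mem _ _ (Submodule.subset_span h₂)))
    (Submodule.smul_mem _ _ (Submodule.subset_span h₃))

theorem span_ne_top_of_forall_snd_snd_eq_zero (h : ∀ u ∈ S, u.2.2 = 0) :
    Submodule.span K S ≠ ⊤ := by
  let π : (K × K × K) →ₗ[K] K := (LinearMap.snd K K K).comp (LinearMap.snd K K (K × K))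
  have hle : Submodule.span K S ≤ LinearMap.ker π := Submodule.span_le.2 h
  intro htop
  have : π (0, 0, 1) = 0 := hle (htop ▸ Submodule.mem_top)
  exact one_ne_zero this

end Span

theorem iterate_LsphV_vFaran_at_one_zero :
    LsphV^[0] vFaran (1, 0) = (1, 0, 0) ∧
    LsphV^[1] vFaran (1, 0) = (0, -((Real.sqrt 3 : ℝ) : ℂ), 0) ∧
    LsphV^[2] vFaran (1, 0) = 0 ∧
    LsphV^[3] vFaran (1, 0) = (0, 0, -6) := by
  refine ⟨?_, ?_, ?_, ?_⟩
  · simp [vFaran]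
  · simp [LsphV_vFaran]
  · simp [iterate_two_LsphV_vFaran]
  · simp [iterate_three_LsphV_vFaran]

/-- Example 1.5: the Faran map `H₃(z₁,z₂) = (z₁³, √3 z₁z₂, z₂³)` maps the
unit sphere `M ⊆ ℂ²` into the unit sphere `M' ⊆ ℂ³` and is `3`-nondegenerate at `p = (1,0)`. -/
theorem faran_third_map_three_nondegenerate :
    -- H₃ maps M into M'
    (∀ p : ℂ × ℂ, Complex.normSq p.1 + Complex.normSq p.2 = 1 → rhoSph (Hfaran p) = 0) ∧
    -- v is indeed the pullback by H₃ of the complex gradient of ρ'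
    (∀ p : ℂ × ℂ, vFaran p = gradSph rhoSph (Hfaran p)) ∧
    -- E₃((1,0)) = ℂ³ and E₂((1,0)) ≠ ℂ³
    (Submodule.span ℂ
      {u : ℂ × ℂ × ℂ | ∃ j ≤ 3, u = LsphV^[j] vFaran ((1 : ℂ), (0 : ℂ))} = ⊤) ∧
    (Submodule.span ℂ
      {u : ℂ × ℂ × ℂ | ∃ j ≤ 2, u = LsphV^[j] vFaran ((1 : ℂ), (0 : ℂ))} ≠ ⊤) := by
  obtain ⟨h₀, h₁, h₂, h₃⟩ := iterate_LsphV_vFaran_at_one_zero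
  refine ⟨fun p hp => by rw [rhoSph_Hfaran, hp]; ring, vFaran_eq_gradSph_rhoSph_comp_Hfaran,
    ?_, ?_⟩
  · exact span_eq_top_of_diagonal_mem one_ne_zero (neg_ne_zero.2 (by norm_num)) (by norm_num)
      ⟨0, by norm_num, h₀.symm⟩ ⟨1, by norm_num, h₁.symm⟩ ⟨3, le_rfl, h₃.symm⟩
  · refine span_ne_top_of_forall_snd_snd_eq_zero ?_
    rintro u ⟨j, hj, rfl⟩
    interval_cases j <;> simp only [h₀, h₁, h₂, Prod.snd_zero]
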